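/- arXiv:2304.07133 — 5 statements merged into one kernel-verified Lean document; each statement's English description precedes it below -/
import Mathlib

section
/- In any execution of the transition system starting from the initial program state where device 1 holds all locks and all other devices hold none, every reachable program state assigns each lock to exactly one device. -/
/-- A program state: each of the `n+1` devices is a pair of a store and a lock set. -/
abbrev PState (St A : Type) (n : ℕ) := Fin (n + 1) → St × Set A

/-- One transition of the system: either an Interact step (one device updates its
store, lock sets unchanged) or a Sync step (a sender transfers a subset of its
locks to a distinct receiver, which merges the sender's store into its own). -/
def Step {St A : Type} [SemilatticeSup St] {n : ℕ} (P P' : PState St A n) : Prop :=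
  (∃ (i : Fin (n + 1)) (σ' : St), P' = Function.update P i (σ', (P i).2)) ∨
  (∃ (s r : Fin (n + 1)) (L : Set A), s ≠ r ∧ L ⊆ (P s).2 ∧
    P' = Function.update (Function.update P s ((P s).1, (P s).2 \ L)) r
          ((P r).1 ⊔ (P s).1, (P r).2 ∪ L))

lemma step_preserves {St A : Type} [SemilatticeSup St] {n : ℕ} {P P' : PState St A n}
    (h : Step P P') (IH : ∀ a : A, ∃! i : Fin (n + 1), a ∈ (P i).2) :
    ∀ a : A, ∃! i : Fin (n + 1), a ∈ (P' i).2 := by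
  intro a
  rcases h with ⟨i, σ', rfl⟩ | ⟨s, r, L, hsr, hLs, rfl⟩
  · obtain ⟨j, hj, huniq⟩ := IH a
    refine ⟨j, ?_, fun k hk => ?_⟩
    · by_cases hji : j = i
      · subst hji; simp [Function.update]; exact hj
      · simp [Function.update, hji]; exact hj
    · by_cases hki : k = i
      · subst hki; simp [Function.update] at hk; exact huniq _ hk
      · simp [Function.update, hki] at hk; exact huniq _ hk
  · obtain ⟨j, hj, huniq⟩ := IH a
    by_cases haL : a ∈ L
    · refine ⟨r, ?_, fun k hk => ?_⟩
      · simp [Function.update]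
        exact Or.inr haL
      · by_cases hkr : k = r
        · exact hkr
        · exfalso
          by_cases hks : k = s
          · subst hks
            simp [Function.update, hkr, Ne.symm hsr] at hk
            exact hk.2 haL
          · simp [Function.update, hkr, hks] at hk
            have h1 : k = j := huniq _ hk
            have h2 : s = j := huniq _ (hLs haL)
            exact hks (h1.trans h2.symm)
    · refine ⟨j, ?_, fun k hk => ?_⟩
      · by_cases hjr : j = r
        · subst hjr
          simp [Function.update]
          exact Or.inl hj
        · by_cases hjs : j = s
          · subst hjs
            simp [Function.update, hjr, Ne.symm hsr]
            exact ⟨hj, haL⟩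
          · simp [Function.update, hjr, hjs]
            exact hj
      · by_cases hkr : k = r
        · subst hkr
          simp [Function.update] at hk
          rcases hk with hk | hk
          · exact huniq _ hk
          · exact absurd hk haL
        · by_cases hks : k = s
          · subst hks
            simp [Function.update, hkr, Ne.symm hsr] at hk
            exact huniq _ hk.1
          · simp [Function.update, hkr, hks] at hk
            exact huniq _ hk

/-- In any execution from the initial state where device `0` holds all locks and
the others none, every reachable state assigns each lock to exactly one device. -/
theorem each_lock_held_by_exactly_one_device {St A : Type} [SemilatticeSup St] {n : ℕ}
    (P0 P : PState St A n)
    (hinit₁ : (P0 0).2 = Set.univ)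
    (hinit₂ : ∀ i : Fin (n + 1), i ≠ 0 → (P0 i).2 = ∅)
    (hreach : Relation.ReflTransGen Step P0 P) :
    ∀ a : A, ∃! i : Fin (n + 1), a ∈ (P i).2 := by
  induction hreach with
  | refl =>
      intro a
      refine ⟨0, by simp [hinit₁], fun k hk => ?_⟩
      by_contra h
      have := hinit₂ k h
      simp only [this] at hk
      exact hk
  | tail _ hstep ih => exact step_preserves hstep ih
end

section
/- The invariant 'lock sets of distinct devices are pairwise disjoint and their union equals the full set of locks A' is preserved by both the Interact transition and the Sync transition. -/
/-- The Interact transition: one device updates its store, all lock sets unchanged. -/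
def Interact {St A : Type} {n : ℕ} (P P' : PState St A n) : Prop :=
  ∃ (i : Fin (n + 1)) (σ' : St), P' = Function.update P i (σ', (P i).2)

/-- The Sync transition: a sender transfers a subset `L` of its locks to a distinct
receiver, which merges the sender's store into its own. -/
def Sync {St A : Type} [SemilatticeSup St] {n : ℕ} (P P' : PState St A n) : Prop :=
  ∃ (s r : Fin (n + 1)) (L : Set A), s ≠ r ∧ L ⊆ (P s).2 ∧
    P' = Function.update (Function.update P s ((P s).1, (P s).2 \ L)) r
          ((P r).1 ⊔ (P s).1, (P r).2 ∪ L)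

/-- Lock sets of distinct devices are pairwise disjoint and their union is all of `A`. -/
def LockInv {St A : Type} {n : ℕ} (P : PState St A n) : Prop :=
  (∀ i j : Fin (n + 1), i ≠ j → Disjoint (P i).2 (P j).2) ∧
  (⋃ i : Fin (n + 1), (P i).2) = Set.univ

/-- The lock invariant is preserved by both Interact and Sync. -/
theorem lock_inv_preserved {St A : Type} [SemilatticeSup St] {n : ℕ}
    (P P' : PState St A n) (hinv : LockInv P) :
    (Interact P P' → LockInv P') ∧ (Sync P P' → LockInv P') := by
  obtain ⟨hdisj, huniv⟩ := hinv
  have hd : ∀ i j : Fin (n + 1), i ≠ j → ∀ a, a ∈ (P i).2 → a ∈ (P j).2 → False :=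
    fun i j h a ha hb => Set.disjoint_left.mp (hdisj i j h) ha hb
  constructor
  · rintro ⟨i, σ', rfl⟩
    have h2 : ∀ j, (Function.update P i (σ', (P i).2) j).2 = (P j).2 := by
      intro j
      by_cases hj : j = i
      · subst hj; simp
      · simp [Function.update_of_ne hj]
    constructor
    · intro a b hab
      rw [Set.disjoint_left]
      intro x hx hy
      rw [h2] at hx hy
      exact hd a b hab x hx hy
    · simp only [h2]; exact huniv
  · rintro ⟨s, r, L, hsr, hL, rfl⟩
    set Q := Function.update (Function.update P s ((P s).1, (P s).2 \ L)) r
          ((P r).1 ⊔ (P s).1, (P r).2 ∪ L) with hQ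
    have h2 : ∀ j, (Q j).2 =
        if j = r then (P r).2 ∪ L else if j = s then (P s).2 \ L else (P j).2 := by
      intro j
      by_cases hjr : j = r
      · subst hjr; simp [hQ]
      · by_cases hjs : j = s
        · subst hjs; simp [hQ, Function.update_of_ne hjr, hsr, if_neg hjr]
        · simp [hQ, Function.update_of_ne hjr, Function.update_of_ne hjs, hjr, hjs]
    have hkey : ∀ j a, a ∈ (Q j).2 →
        ∃ k, a ∈ (P k).2 ∧ (k = j ∨ (j = r ∧ k = s ∧ a ∈ L)) := by
      intro j a ha
      rw [h2] at ha
      by_cases hjr : j = r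
      · rw [if_pos hjr] at ha
        rcases ha with ha | ha
        · exact ⟨r, ha, Or.inl hjr.symm⟩
        · exact ⟨s, hL ha, Or.inr ⟨hjr, rfl, ha⟩⟩
      · rw [if_neg hjr] at ha
        by_cases hjs : j = s
        · rw [if_pos hjs] at ha; exact ⟨s, ha.1, Or.inl hjs.symm⟩
        · rw [if_neg hjs] at ha; exact ⟨j, ha, Or.inl rfl⟩
    have hsnotL : ∀ a, a ∈ (Q s).2 → a ∉ L := by
      intro a ha
      rw [h2, if_neg hsr, if_pos rfl] at ha
      exact ha.2
    constructor
    · intro i j hij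
      rw [Set.disjoint_left]
      intro a hai haj
      obtain ⟨k1, hk1, hc1⟩ := hkey i a hai
      obtain ⟨k2, hk2, hc2⟩ := hkey j a haj
      by_cases hk : k1 = k2
      · rcases hc1 with h1 | ⟨hir, h1s, haL1⟩
        · rcases hc2 with h2' | ⟨hjr, h2s, haL2⟩
          · exact hij ((h1.symm.trans hk).trans h2')
          · -- i = k1 = k2 = s
            have : i = s := (h1.symm.trans hk).trans h2s
            exact hsnotL a (this ▸ hai) haL2
        · rcases hc2 with h2' | ⟨hjr, h2s, haL2⟩
          · have : j = s := (h2'.symm.trans hk.symm).trans h1s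
            exact hsnotL a (this ▸ haj) haL1
          · exact hij (hir.trans hjr.symm)
      · exact hd k1 k2 hk a hk1 hk2
    · apply Set.eq_univ_of_forall
      intro a
      have : a ∈ ⋃ i : Fin (n + 1), (P i).2 := huniv ▸ Set.mem_univ a
      obtain ⟨i, hi⟩ := Set.mem_iUnion.mp this
      by_cases haL : a ∈ L
      · refine Set.mem_iUnion.mpr ⟨r, ?_⟩
        rw [h2, if_pos rfl]; exact Or.inr haL
      · by_cases hir : i = r
        · refine Set.mem_iUnion.mpr ⟨r, ?_⟩
          rw [h2, if_pos rfl]; exact Or.inl (hir ▸ hi)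
        · by_cases his : i = s
          · refine Set.mem_iUnion.mpr ⟨s, ?_⟩
            rw [h2, if_neg hsr, if_pos rfl]; exact ⟨his ▸ hi, haL⟩
          · refine Set.mem_iUnion.mpr ⟨i, ?_⟩
            rw [h2, if_neg hir, if_neg his]; exact hi
end

section
/- If each Sync transition transfers locks from a sender to a receiver while merging the sender's store into the receiver's (so the receiver's new store dominates the sender's store in the lattice order), and each Interact transition only increases the acting device's store, then for any two conflicting interactions executed in an execution, one interaction's post-state store is below the other interaction's pre-state store (conflicting interactions are sequentially ordered). -/
/-- Transition labels: an interaction `a` executed by device `i`, or a synchronization. -/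
inductive Lbl (A : Type) (n : ℕ)
  | interact (a : A) (i : Fin (n + 1))
  | sync

/-- Labelled transitions. Interact requires the acting device to hold all locks in
`conflicts a` and weakly increases its store, leaving all lock sets unchanged.
Sync transfers locks `L ⊆ L_s` from a sender to a distinct receiver, which joins
the sender's store into its own (so the receiver's new store dominates the sender's). -/
def LStep {St A : Type} [SemilatticeSup St] {n : ℕ} (conflicts : A → Set A)
    (P : PState St A n) (l : Lbl A n) (P' : PState St A n) : Prop :=
  match l with
  | .interact a i =>
      conflicts a ⊆ (P i).2 ∧
      ∃ σ' : St, (P i).1 ≤ σ' ∧ P' = Function.update P i (σ', (P i).2)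
  | .sync =>
      ∃ (s r : Fin (n + 1)) (L : Set A), s ≠ r ∧ L ⊆ (P s).2 ∧
        P' = Function.update (Function.update P s ((P s).1, (P s).2 \ L)) r
              ((P r).1 ⊔ (P s).1, (P r).2 ∪ L)

lemma lstep_pres_unique {St A : Type} [SemilatticeSup St] {n : ℕ} {conflicts : A → Set A}
    {P P' : PState St A n} {l : Lbl A n} (h : LStep conflicts P l P') (x : A)
    (hu : ∀ j j' : Fin (n+1), x ∈ (P j).2 → x ∈ (P j').2 → j = j') :
    ∀ j j' : Fin (n+1), x ∈ (P' j).2 → x ∈ (P' j').2 → j = j' := by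
  cases l with
  | interact a i =>
    obtain ⟨-, σ', -, rfl⟩ := h
    have hset : ∀ j, (Function.update P i (σ', (P i).2) j).2 = (P j).2 := by
      intro j; rcases eq_or_ne j i with rfl | hj <;> simp [Function.update_apply, *]
    intro j j' hj hj'
    rw [hset] at hj hj'
    exact hu j j' hj hj'
  | sync =>
    obtain ⟨s, r, L, hsr, hLs, rfl⟩ := h
    have hmem : ∀ j, x ∈ (Function.update (Function.update P s ((P s).1, (P s).2 \ L)) r
        ((P r).1 ⊔ (P s).1, (P r).2 ∪ L) j).2 →
        (x ∈ (P j).2 ∧ (j = s → x ∉ L)) ∨ (j = r ∧ x ∈ L) := by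
      intro j hj
      rcases eq_or_ne j r with rfl | hr
      · simp only [Function.update_self] at hj
        rcases hj with hj | hj
        · by_cases hxL : x ∈ L
          · exact Or.inr ⟨rfl, hxL⟩
          · exact Or.inl ⟨hj, fun hjs => absurd hjs.symm hsr⟩
        · exact Or.inr ⟨rfl, hj⟩
      · rw [Function.update_of_ne hr] at hj
        rcases eq_or_ne j s with rfl | hs
        · simp only [Function.update_self] at hj
          exact Or.inl ⟨hj.1, fun _ => hj.2⟩
        · rw [Function.update_of_ne hs] at hj
          exact Or.inl ⟨hj, fun h => absurd h hs⟩
    intro j j' hj hj'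
    rcases hmem j hj with ⟨h1, h2⟩ | ⟨rfl, hxL⟩ <;>
      rcases hmem j' hj' with ⟨h1', h2'⟩ | ⟨rfl, hxL'⟩
    · exact hu j j' h1 h1'
    · exact absurd hxL' (h2 (hu j s h1 (hLs hxL')))
    · exact absurd hxL (h2' (hu j' s h1' (hLs hxL))).elim
    · rfl

lemma lstep_pres_mono {St A : Type} [SemilatticeSup St] {n : ℕ} {conflicts : A → Set A}
    {P P' : PState St A n} {l : Lbl A n} (h : LStep conflicts P l P') (x : A) (σ₀ : St)
    (hH : ∀ j : Fin (n+1), x ∈ (P j).2 → σ₀ ≤ (P j).1) :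
    ∀ j : Fin (n+1), x ∈ (P' j).2 → σ₀ ≤ (P' j).1 := by
  cases l with
  | interact a i =>
    obtain ⟨-, σ', hσ', rfl⟩ := h
    intro j hj
    rcases eq_or_ne j i with rfl | hji
    · simp only [Function.update_self] at hj ⊢
      exact (hH j hj).trans hσ'
    · rw [Function.update_of_ne hji] at hj ⊢
      exact hH j hj
  | sync =>
    obtain ⟨s, r, L, hsr, hLs, rfl⟩ := h
    intro j hj
    rcases eq_or_ne j r with rfl | hr
    · simp only [Function.update_self] at hj ⊢
      rcases hj with hj | hj
      · exact (hH j hj).trans le_sup_left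
      · exact (hH s (hLs hj)).trans le_sup_right
    · rw [Function.update_of_ne hr] at hj ⊢
      rcases eq_or_ne j s with rfl | hs
      · simp only [Function.update_self] at hj ⊢
        exact hH j hj.1
      · rw [Function.update_of_ne hs] at hj ⊢
        exact hH j hj

lemma exec_pres {St A : Type} [SemilatticeSup St] {n m : ℕ} {conflicts : A → Set A}
    {Ps : Fin (m + 1) → PState St A n} {ls : Fin m → Lbl A n}
    (hsteps : ∀ k : Fin m, LStep conflicts (Ps k.castSucc) (ls k) (Ps k.succ))
    (Q : PState St A n → Prop)
    (hQ : ∀ {P l P'}, LStep conflicts P l P' → Q P → Q P')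
    {t₁ t₂ : Fin (m + 1)} (hle : t₁ ≤ t₂) (h : Q (Ps t₁)) : Q (Ps t₂) := by
  obtain ⟨d, hd⟩ : ∃ d, (t₂ : ℕ) = (t₁ : ℕ) + d := ⟨t₂ - t₁, by omega⟩
  clear hle
  induction d generalizing t₂ with
  | zero => have : t₂ = t₁ := Fin.ext (by omega); rwa [this]
  | succ d ih =>
    have hk : (t₁ : ℕ) + d < m := by have := t₂.isLt; omega
    set k : Fin m := ⟨(t₁ : ℕ) + d, hk⟩ with hkdef
    have ht₂ : t₂ = k.succ := Fin.ext (by simp [Fin.succ, hkdef]; omega)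
    have hcast : Q (Ps k.castSucc) := ih (t₂ := k.castSucc) (by simp [Fin.castSucc, Fin.castAdd, hkdef])
    rw [ht₂]
    exact hQ (hsteps k) hcast

lemma key {St A : Type} [SemilatticeSup St] {n m : ℕ} (conflicts : A → Set A)
    (Ps : Fin (m + 1) → PState St A n) (ls : Fin m → Lbl A n)
    (hinit₁ : (Ps 0 0).2 = Set.univ)
    (hinit₂ : ∀ i : Fin (n + 1), i ≠ 0 → (Ps 0 i).2 = ∅)
    (hsteps : ∀ k : Fin m, LStep conflicts (Ps k.castSucc) (ls k) (Ps k.succ))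
    (k₁ k₂ : Fin m) (hlt : k₁ < k₂) (a₁ a₂ : A) (i₁ i₂ : Fin (n + 1))
    (hl₁ : ls k₁ = .interact a₁ i₁) (hl₂ : ls k₂ = .interact a₂ i₂)
    (hconf : (conflicts a₁ ∩ conflicts a₂).Nonempty) :
    (Ps k₁.succ i₁).1 ≤ (Ps k₂.castSucc i₂).1 := by
  obtain ⟨x, hx₁, hx₂⟩ := hconf
  have h₁ := hsteps k₁; rw [hl₁] at h₁
  obtain ⟨hsub₁, σ', hσ', hP₁⟩ := h₁
  have h₂ := hsteps k₂; rw [hl₂] at h₂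
  obtain ⟨hsub₂, -⟩ := h₂
  have hu0 : ∀ j j' : Fin (n+1), x ∈ (Ps 0 j).2 → x ∈ (Ps 0 j').2 → j = j' := by
    have hz : ∀ j : Fin (n+1), x ∈ (Ps 0 j).2 → j = 0 := by
      intro j hj
      by_contra hj0
      rw [hinit₂ j hj0] at hj
      exact hj
    intro j j' hj hj'
    rw [hz j hj, hz j' hj']
  have huk : ∀ j j' : Fin (n+1), x ∈ (Ps k₁.succ j).2 → x ∈ (Ps k₁.succ j').2 → j = j' :=
    exec_pres hsteps (fun P => ∀ j j' : Fin (n+1), x ∈ (P j).2 → x ∈ (P j').2 → j = j')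
      (fun hstep hu => lstep_pres_unique hstep x hu) (Fin.zero_le _) hu0
  have hx_succ : x ∈ (Ps k₁.succ i₁).2 := by
    rw [hP₁, Function.update_self]; exact hsub₁ hx₁
  have hH : ∀ j : Fin (n+1), x ∈ (Ps k₁.succ j).2 → (Ps k₁.succ i₁).1 ≤ (Ps k₁.succ j).1 := by
    intro j hj
    rw [huk j i₁ hj hx_succ]
  have hle : k₁.succ ≤ k₂.castSucc := by
    have h := Fin.lt_def.mp hlt
    rw [Fin.le_def, Fin.val_succ, Fin.coe_castSucc]
    omega
  have hHend := exec_pres hsteps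
      (fun P => ∀ j : Fin (n+1), x ∈ (P j).2 → (Ps k₁.succ i₁).1 ≤ (P j).1)
      (fun hstep hH => lstep_pres_mono hstep x _ hH) hle hH
  exact hHend i₂ (hsub₂ hx₂)

/-- Correct locking: in any execution from the initial state (device `0` holds all
locks), any two conflicting Interact transitions are sequentially ordered: the
post-state store of one is below the pre-state store of the other. -/
theorem conflicting_interactions_sequentially_ordered
    {St A : Type} [SemilatticeSup St] {n m : ℕ} (conflicts : A → Set A)
    (Ps : Fin (m + 1) → PState St A n) (ls : Fin m → Lbl A n)
    (hinit₁ : (Ps 0 0).2 = Set.univ)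
    (hinit₂ : ∀ i : Fin (n + 1), i ≠ 0 → (Ps 0 i).2 = ∅)
    (hsteps : ∀ k : Fin m, LStep conflicts (Ps k.castSucc) (ls k) (Ps k.succ))
    (k₁ k₂ : Fin m) (hne : k₁ ≠ k₂) (a₁ a₂ : A) (i₁ i₂ : Fin (n + 1))
    (hl₁ : ls k₁ = .interact a₁ i₁) (hl₂ : ls k₂ = .interact a₂ i₂)
    (hconf : (conflicts a₁ ∩ conflicts a₂).Nonempty) :
    (Ps k₁.succ i₁).1 ≤ (Ps k₂.castSucc i₂).1 ∨
    (Ps k₂.succ i₂).1 ≤ (Ps k₁.castSucc i₁).1 := by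
  rcases hne.lt_or_gt with hlt | hlt
  · exact Or.inl (key conflicts Ps ls hinit₁ hinit₂ hsteps k₁ k₂ hlt a₁ a₂ i₁ i₂ hl₁ hl₂ hconf)
  · exact Or.inr (key conflicts Ps ls hinit₁ hinit₂ hsteps k₂ k₁ hlt a₂ a₁ i₂ i₁ hl₂ hl₁
      (by rwa [Set.inter_comm]))
end

section
/- If every interaction of a program is invariant-preserving, and every device's final store in an execution can be produced by some sequence of Interact steps from a valid initial device state, then validity of the initial program state implies validity of every reachable program state (program safety). -/
/-- Safety from serialization: if every interaction is invariant-preserving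
(w.r.t. a validity predicate on stores), and every device's store in any reachable
program state can be produced by a sequence of Interact steps from some valid
initial store, then validity of the initial program state implies validity of
every reachable program state. -/
theorem safety_from_serialization {St A : Type} {n : ℕ}
    (valid : St → Prop)
    (InteractStep : A → St → St → Prop)
    (Step : PState St A n → PState St A n → Prop)
    (P0 : PState St A n)
    (hpres : ∀ (a : A) (σ σ' : St), valid σ → InteractStep a σ σ' → valid σ')
    (hser : ∀ P : PState St A n, Relation.ReflTransGen Step P0 P →
      ∀ i : Fin (n + 1), ∃ σ0 : St, valid σ0 ∧
        Relation.ReflTransGen (fun σ σ' => ∃ a, InteractStep a σ σ') σ0 (P i).1)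
    (hvalid0 : ∀ i : Fin (n + 1), valid (P0 i).1) :
    ∀ P : PState St A n, Relation.ReflTransGen Step P0 P →
      ∀ i : Fin (n + 1), valid (P i).1 := by
  intro P hP i
  obtain ⟨σ0, hv0, hchain⟩ := hser P hP i
  generalize h : (P i).1 = σ at hchain
  clear h
  induction hchain with
  | refl => exact hv0
  | tail _ hstep ih =>
    obtain ⟨a, ha⟩ := hstep
    exact hpres a _ _ ih ha
end

section
/- If an interaction's reachable reactives (the affected sources plus all transitively derived reactives depending on them) are disjoint from the set of reactives mentioned by an invariant, then executing that interaction cannot change the truth value of that invariant. -/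
/-- Reachability in the data-flow graph: a reactive is reachable from `W` if it is
in `W` or (transitively) depends on a reachable reactive. -/
inductive Reach {N : Type*} (dep : N → Set N) (W : Set N) : N → Prop
  | base {n : N} : n ∈ W → Reach dep W n
  | step {n m : N} : m ∈ dep n → Reach dep W m → Reach dep W n

/-- If an interaction's reachable reactives are disjoint from the reactives an
invariant mentions, executing the interaction changes neither the values of those
reactives nor the truth value of the invariant. -/
theorem unreachable_invariant_unchanged {N V : Type*}
    (Src : Set N) (dep : N → Set N)
    (hdag : WellFounded (fun m n => m ∈ dep n))
    (W : Set N) (hW : W ⊆ Src)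
    (val val' : N → V)
    (hsrc : ∀ n ∈ Src, n ∉ W → val n = val' n)
    (hder : ∀ n, n ∉ Src → (∀ m ∈ dep n, val m = val' m) → val n = val' n)
    (Vs : Set N) (Inv : (N → V) → Prop)
    (hInv : ∀ v v' : N → V, (∀ n ∈ Vs, v n = v' n) → (Inv v ↔ Inv v'))
    (hdisj : ∀ n ∈ Vs, ¬ Reach dep W n) :
    (∀ n ∈ Vs, val n = val' n) ∧ (Inv val ↔ Inv val') := by
  have key : ∀ n, ¬ Reach dep W n → val n = val' n := by
    intro n
    induction n using hdag.induction with
    | _ n ih =>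
      intro hn
      by_cases hs : n ∈ Src
      · exact hsrc n hs (fun hw => hn (Reach.base hw))
      · exact hder n hs (fun m hm => ih m hm (fun hr => hn (Reach.step hm hr)))
  have h1 : ∀ n ∈ Vs, val n = val' n := fun n hn => key n (hdisj n hn)
  exact ⟨h1, hInv val val' h1⟩
end
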